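/- arXiv:0903.3291 — 4 statements merged into one kernel-verified Lean document; each statement's English description precedes it below -/
import Mathlib

section
/- Let F be a field of characteristic zero and let A and B be commutative F-algebras. For every k ≥ 1 there is a surjective homomorphism of (A ⊗_F B)-modules from P^k_A ⊗_F P^k_B onto P^k_{A⊗_F B}, where P^k_R = (R ⊗_F R)/I^{k+1} with I the kernel of the multiplication map R ⊗_F R → R. -/
open TensorProduct

set_option maxHeartbeats 1000000
set_option synthInstance.maxHeartbeats 100000

/-- The k-th jet algebra P^k_A = (A ⊗[F] A)/I^{k+1}, where I is the kernel of the
multiplication map A ⊗[F] A → A.  It is an A-module via the left tensor factor. -/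
abbrev JetAlg (F A : Type*) [CommRing F] [CommRing A] [Algebra F A] (k : ℕ) : Type _ :=
  (A ⊗[F] A) ⧸ (KaehlerDifferential.ideal F A ^ (k + 1))

section aux

variable (F A B : Type*) [Field F] [CommRing A] [Algebra F A] [CommRing B] [Algebra F B]

noncomputable def jetE : ((A ⊗[F] A) ⊗[F] (B ⊗[F] B)) ≃ₐ[F] ((A ⊗[F] B) ⊗[F] (A ⊗[F] B)) :=
  Algebra.TensorProduct.tensorTensorTensorComm F F F F A A B B

noncomputable def jetL : (A ⊗[F] A) →ₐ[F] ((A ⊗[F] B) ⊗[F] (A ⊗[F] B)) :=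
  (jetE F A B).toAlgHom.comp (Algebra.TensorProduct.includeLeft)

noncomputable def jetR : (B ⊗[F] B) →ₐ[F] ((A ⊗[F] B) ⊗[F] (A ⊗[F] B)) :=
  (jetE F A B).toAlgHom.comp (Algebra.TensorProduct.includeRight)

lemma jetL_ideal : ∀ x ∈ KaehlerDifferential.ideal F A,
    jetL F A B x ∈ KaehlerDifferential.ideal F (A ⊗[F] B) := by
  intro x hx
  rw [RingHom.mem_ker] at hx ⊢
  have key : (Algebra.TensorProduct.lmul' F :
        (A ⊗[F] B) ⊗[F] (A ⊗[F] B) →ₐ[F] A ⊗[F] B).comp (jetL F A B)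
      = (Algebra.TensorProduct.includeLeft : A →ₐ[F] A ⊗[F] B).comp
          (Algebra.TensorProduct.lmul' F) := by
    ext a
    · simp [jetL, jetE, Algebra.TensorProduct.one_def,
        Algebra.TensorProduct.tensorTensorTensorComm_tmul]
    · simp [jetL, jetE, Algebra.TensorProduct.one_def,
        Algebra.TensorProduct.tensorTensorTensorComm_tmul]
  have := DFunLike.congr_fun key x
  simpa [hx] using this

lemma jetR_ideal : ∀ x ∈ KaehlerDifferential.ideal F B,
    jetR F A B x ∈ KaehlerDifferential.ideal F (A ⊗[F] B) := by
  intro x hx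
  rw [RingHom.mem_ker] at hx ⊢
  have key : (Algebra.TensorProduct.lmul' F :
        (A ⊗[F] B) ⊗[F] (A ⊗[F] B) →ₐ[F] A ⊗[F] B).comp (jetR F A B)
      = (Algebra.TensorProduct.includeRight : B →ₐ[F] A ⊗[F] B).comp
          (Algebra.TensorProduct.lmul' F) := by
    ext b
    · simp [jetR, jetE, Algebra.TensorProduct.one_def,
        Algebra.TensorProduct.tensorTensorTensorComm_tmul]
    · simp [jetR, jetE, Algebra.TensorProduct.one_def,
        Algebra.TensorProduct.tensorTensorTensorComm_tmul]
  have := DFunLike.congr_fun key x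
  simpa [hx] using this

end aux


section main

variable (F A B : Type*) [Field F] [CommRing A] [Algebra F A] [CommRing B] [Algebra F B] (k : ℕ)

lemma jetE_eq_mul (x : A ⊗[F] A) (y : B ⊗[F] B) :
    jetE F A B (x ⊗ₜ[F] y) = jetL F A B x * jetR F A B y := by
  have : x ⊗ₜ[F] y = (x ⊗ₜ[F] (1 : B ⊗[F] B)) * ((1 : A ⊗[F] A) ⊗ₜ[F] y) := by
    simp [Algebra.TensorProduct.tmul_mul_tmul]
  rw [this, map_mul]
  rfl
noncomputable def jetG : ((A ⊗[F] A) ⊗[F] (B ⊗[F] B)) →ₗ[F] JetAlg F (A ⊗[F] B) k :=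
  (Submodule.Quotient.restrictScalarsEquiv F
      (KaehlerDifferential.ideal F (A ⊗[F] B) ^ (k + 1))).toLinearMap ∘ₗ
    (((KaehlerDifferential.ideal F (A ⊗[F] B) ^ (k + 1)).restrictScalars F).mkQ) ∘ₗ
    (jetE F A B).toLinearMap

lemma jetG_tmul (x : A ⊗[F] A) (y : B ⊗[F] B) :
    jetG F A B k (x ⊗ₜ[F] y) = Submodule.Quotient.mk (jetE F A B (x ⊗ₜ[F] y)) := by
  simp [jetG, Submodule.Quotient.restrictScalarsEquiv_mk]

lemma jetG_zero_iff (z : (A ⊗[F] A) ⊗[F] (B ⊗[F] B)) :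
    jetG F A B k z = 0 ↔ jetE F A B z ∈ KaehlerDifferential.ideal F (A ⊗[F] B) ^ (k + 1) := by
  simp only [jetG, LinearMap.comp_apply, LinearEquiv.coe_toLinearMap, Submodule.mkQ_apply,
    EmbeddingLike.map_eq_zero_iff, Submodule.Quotient.mk_eq_zero,
    Submodule.restrictScalars_mem, AlgEquiv.toLinearMap_apply]

lemma jetG_left (x : A ⊗[F] A) (hx : x ∈ KaehlerDifferential.ideal F A ^ (k + 1))
    (y : B ⊗[F] B) : jetG F A B k (x ⊗ₜ[F] y) = 0 := by
  rw [jetG_zero_iff, jetE_eq_mul]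
  have h1 : jetL F A B x ∈ KaehlerDifferential.ideal F (A ⊗[F] B) ^ (k + 1) := by
    have : Ideal.map (jetL F A B) (KaehlerDifferential.ideal F A ^ (k + 1)) ≤
        KaehlerDifferential.ideal F (A ⊗[F] B) ^ (k + 1) := by
      rw [Ideal.map_pow]
      exact Ideal.pow_right_mono (Ideal.map_le_iff_le_comap.2 (fun z hz => Ideal.mem_comap.2 (jetL_ideal F A B z hz))) _
    exact this (Ideal.mem_map_of_mem _ hx)
  exact Ideal.mul_mem_right _ _ h1

lemma jetG_right (x : A ⊗[F] A) (y : B ⊗[F] B)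
    (hy : y ∈ KaehlerDifferential.ideal F B ^ (k + 1)) : jetG F A B k (x ⊗ₜ[F] y) = 0 := by
  rw [jetG_zero_iff, jetE_eq_mul]
  have h1 : jetR F A B y ∈ KaehlerDifferential.ideal F (A ⊗[F] B) ^ (k + 1) := by
    have : Ideal.map (jetR F A B) (KaehlerDifferential.ideal F B ^ (k + 1)) ≤
        KaehlerDifferential.ideal F (A ⊗[F] B) ^ (k + 1) := by
      rw [Ideal.map_pow]
      exact Ideal.pow_right_mono (Ideal.map_le_iff_le_comap.2 (fun z hz => Ideal.mem_comap.2 (jetR_ideal F A B z hz))) _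
    exact this (Ideal.mem_map_of_mem _ hy)
  exact Ideal.mul_mem_left _ _ h1

lemma jetJ_le_ker :
    (LinearMap.range (TensorProduct.map
        ((KaehlerDifferential.ideal F A ^ (k + 1)).restrictScalars F).subtype LinearMap.id) ⊔
      LinearMap.range (TensorProduct.map LinearMap.id
        ((KaehlerDifferential.ideal F B ^ (k + 1)).restrictScalars F).subtype)) ≤
      LinearMap.ker (jetG F A B k) := by
  apply sup_le
  · rintro _ ⟨u, rfl⟩
    rw [LinearMap.mem_ker]
    induction u with
    | zero => rw [map_zero, map_zero]
    | tmul x y =>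
      rw [TensorProduct.map_tmul]
      exact jetG_left F A B k x.1 x.2 y
    | add u v hu hv => rw [map_add, map_add, hu, hv, add_zero]
  · rintro _ ⟨u, rfl⟩
    rw [LinearMap.mem_ker]
    induction u with
    | zero => rw [map_zero, map_zero]
    | tmul x y =>
      rw [TensorProduct.map_tmul]
      exact jetG_right F A B k x y.1 y.2
    | add u v hu hv => rw [map_add, map_add, hu, hv, add_zero]

noncomputable def jetPhi :
    (JetAlg F A k) ⊗[F] (JetAlg F B k) →ₗ[F] JetAlg F (A ⊗[F] B) k :=
  (Submodule.liftQ _ (jetG F A B k) (jetJ_le_ker F A B k)) ∘ₗ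
    (TensorProduct.quotientTensorQuotientEquiv
      ((KaehlerDifferential.ideal F A ^ (k + 1)).restrictScalars F)
      ((KaehlerDifferential.ideal F B ^ (k + 1)).restrictScalars F)).toLinearMap ∘ₗ
    (TensorProduct.congr
      (Submodule.Quotient.restrictScalarsEquiv F (KaehlerDifferential.ideal F A ^ (k + 1))).symm
      (Submodule.Quotient.restrictScalarsEquiv F
        (KaehlerDifferential.ideal F B ^ (k + 1))).symm).toLinearMap

lemma jetPhi_tmul (x : A ⊗[F] A) (y : B ⊗[F] B) :
    jetPhi F A B k ((Submodule.Quotient.mk x) ⊗ₜ[F] (Submodule.Quotient.mk y)) =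
      Submodule.Quotient.mk (jetE F A B (x ⊗ₜ[F] y)) := by
  simp only [jetPhi, LinearMap.comp_apply, LinearEquiv.coe_toLinearMap, TensorProduct.congr_tmul,
    Submodule.Quotient.restrictScalarsEquiv_symm_mk,
    TensorProduct.quotientTensorQuotientEquiv_apply_tmul_mk_tmul_mk,
    Submodule.liftQ_apply, jetG_tmul]

lemma jet_smul_mk (a : A) (u : A ⊗[F] A) :
    a • (Submodule.Quotient.mk u : JetAlg F A k) =
      Submodule.Quotient.mk ((a ⊗ₜ[F] (1 : A)) * u) := by
  rw [← Submodule.Quotient.mk_smul]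
  congr 1
  rw [Algebra.smul_def]
  rfl

end main

/-- Let F be a field of characteristic zero and A, B commutative F-algebras.
For every k ≥ 1 there is a surjective homomorphism of (A ⊗[F] B)-modules
P^k_A ⊗[F] P^k_B → P^k_{A ⊗[F] B}; the (A ⊗[F] B)-module structures are via the left tensor
factors, so (A ⊗[F] B)-linearity is expressed by compatibility with the actions of all
`a ⊗ₜ b`. -/
theorem stmt0 (F A B : Type*) [Field F] [CharZero F] [CommRing A] [Algebra F A]
    [CommRing B] [Algebra F B] (k : ℕ) (hk : 1 ≤ k) :
    ∃ φ : (JetAlg F A k) ⊗[F] (JetAlg F B k) →ₗ[F] JetAlg F (A ⊗[F] B) k,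
      Function.Surjective φ ∧
      ∀ (a : A) (b : B) (x : JetAlg F A k) (y : JetAlg F B k),
        φ ((a • x) ⊗ₜ[F] (b • y)) = (a ⊗ₜ[F] b) • φ (x ⊗ₜ[F] y) := by
  refine ⟨jetPhi F A B k, ?_, ?_⟩
  · intro z
    obtain ⟨c, rfl⟩ := Submodule.Quotient.mk_surjective _ z
    obtain ⟨u, rfl⟩ := (jetE F A B).surjective c
    induction u with
    | zero => exact ⟨0, by rw [map_zero, map_zero, Submodule.Quotient.mk_zero]⟩
    | tmul x y => exact ⟨Submodule.Quotient.mk x ⊗ₜ Submodule.Quotient.mk y, jetPhi_tmul F A B k x y⟩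
    | add u v hu hv =>
      obtain ⟨t₁, ht₁⟩ := hu
      obtain ⟨t₂, ht₂⟩ := hv
      exact ⟨t₁ + t₂, by rw [map_add, ht₁, ht₂, map_add, ← Submodule.Quotient.mk_add]⟩
  · intro a b x y
    obtain ⟨u, rfl⟩ := Submodule.Quotient.mk_surjective _ x
    obtain ⟨v, rfl⟩ := Submodule.Quotient.mk_surjective _ y
    rw [jet_smul_mk, jet_smul_mk, jetPhi_tmul, jetPhi_tmul, jet_smul_mk]
    · congr 1
      have : ((a ⊗ₜ[F] (1:A)) * u) ⊗ₜ[F] ((b ⊗ₜ[F] (1:B)) * v)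
          = (((a ⊗ₜ[F] (1:A)) ⊗ₜ[F] (b ⊗ₜ[F] (1:B))) * (u ⊗ₜ[F] v)) := by
        rw [Algebra.TensorProduct.tmul_mul_tmul]
      rw [this, map_mul]
      congr 1
end

section
/- Let F be a field of characteristic zero and let A₁, …, A_s be commutative F-algebras. For every k ≥ 1 there is a surjective map of (A₁ ⊗ ⋯ ⊗ A_s)-modules from P^k_{A₁} ⊗_F ⋯ ⊗_F P^k_{A_s} onto P^k_{A₁ ⊗ ⋯ ⊗ A_s}. -/
open TensorProduct PiTensorProduct

set_option maxHeartbeats 1000000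
set_option synthInstance.maxHeartbeats 400000
set_option linter.unusedSectionVars false
set_option linter.unusedVariables false

section Aux
variable (F : Type*) [Field F] (s : ℕ) (A : Fin s → Type*)
    [∀ i, CommRing (A i)] [∀ i, Algebra F (A i)] (k : ℕ)

local notation "B" => ⨂[F] i, A i

noncomputable def gmap (i : Fin s) : (A i ⊗[F] A i) →ₐ[F] (B ⊗[F] B) :=
  Algebra.TensorProduct.map (PiTensorProduct.singleAlgHom i) (PiTensorProduct.singleAlgHom i)

lemma gmap_comm (i : Fin s) :
    (Algebra.TensorProduct.lmul' F (S := B)).comp (gmap F s A i)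
      = (PiTensorProduct.singleAlgHom i).comp (Algebra.TensorProduct.lmul' F) := by
  ext x
  · simp [gmap]
  · simp [gmap]

lemma gmap_ideal_le (i : Fin s) :
    (KaehlerDifferential.ideal F (A i)) ^ (k + 1) ≤
      ((KaehlerDifferential.ideal F B ^ (k + 1)).comap (gmap F s A i)) := by
  rw [← Ideal.map_le_iff_le_comap, Ideal.map_pow]
  refine Ideal.pow_right_mono ?_ _
  rw [Ideal.map_le_iff_le_comap]
  intro x hx
  have := congrArg (fun f => f x) (gmap_comm F s A i)
  simp only [AlgHom.coe_comp, Function.comp_apply] at this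
  simp only [Ideal.mem_comap, KaehlerDifferential.ideal, RingHom.mem_ker] at hx ⊢
  rw [show (Algebra.TensorProduct.lmul' F : B ⊗[F] B →ₐ[F] B) ((gmap F s A i) x)
      = (PiTensorProduct.singleAlgHom i) ((Algebra.TensorProduct.lmul' F) x) from this, hx, map_zero]

noncomputable def psi (i : Fin s) : JetAlg F (A i) k →ₐ[F] JetAlg F B k :=
  Ideal.quotientMapₐ _ (gmap F s A i) (gmap_ideal_le F s A k i)

end Aux

section Main
variable (F : Type*) [Field F] (s : ℕ) (A : Fin s → Type*)
    [∀ i, CommRing (A i)] [∀ i, Algebra F (A i)] (k : ℕ)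

local notation "B" => ⨂[F] i, A i

noncomputable def phi : (⨂[F] i, JetAlg F (A i) k) →ₗ[F] JetAlg F B k :=
  PiTensorProduct.lift
    ((MultilinearMap.mkPiAlgebra F (Fin s) (JetAlg F B k)).compLinearMap
      (fun i => (psi F s A k i).toLinearMap))

lemma phi_tprod (x : ∀ i, JetAlg F (A i) k) :
    phi F s A k (⨂ₜ[F] i, x i) = ∏ i, psi F s A k i (x i) := by
  simp [phi]

lemma prod_tmul {ι S T : Type*} [CommRing S] [CommRing T] (F : Type*) [Field F]
    [Algebra F S] [Algebra F T] (t : Finset ι) (f : ι → S) (h : ι → T) :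
    (∏ i ∈ t, (f i ⊗ₜ[F] h i)) = (∏ i ∈ t, f i) ⊗ₜ[F] (∏ i ∈ t, h i) := by
  classical
  induction t using Finset.induction with
  | empty => simp [Algebra.TensorProduct.one_def]
  | insert _ _ hnotmem ih => simp [Finset.prod_insert hnotmem, ih,
      Algebra.TensorProduct.tmul_mul_tmul]

lemma prod_gmap (b c : ∀ i, A i) :
    (∏ i, gmap F s A i ((b i) ⊗ₜ[F] (c i))) = (tprod F b) ⊗ₜ[F] (tprod F c) := by
  simp only [gmap, Algebra.TensorProduct.map_tmul, PiTensorProduct.singleAlgHom_apply]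
  rw [prod_tmul]
  congr 1
  · rw [show (PiTensorProduct.tprod F) b
        = (PiTensorProduct.tprodMonoidHom F (A := A)) (∏ i, Pi.mulSingle i (b i)) by
          rw [Finset.univ_prod_mulSingle b]; rfl, map_prod]
    rfl
  · rw [show (PiTensorProduct.tprod F) c
        = (PiTensorProduct.tprodMonoidHom F (A := A)) (∏ i, Pi.mulSingle i (c i)) by
          rw [Finset.univ_prod_mulSingle c]; rfl, map_prod]
    rfl

lemma phi_mk (y : ∀ i, (A i) ⊗[F] (A i)) :
    phi F s A k (⨂ₜ[F] i, Ideal.Quotient.mk _ (y i)) =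
      Ideal.Quotient.mk _ (∏ i, gmap F s A i (y i)) := by
  rw [phi_tprod, map_prod]
  rfl

lemma phi_mk_tmul (b c : ∀ i, A i) :
    phi F s A k (⨂ₜ[F] i, Ideal.Quotient.mk _ ((b i) ⊗ₜ[F] (c i))) =
      Ideal.Quotient.mk _ ((tprod F b) ⊗ₜ[F] (tprod F c)) := by
  rw [phi_mk, prod_gmap]

end Main

section Main2
variable (F : Type*) [Field F] (s : ℕ) (A : Fin s → Type*)
    [∀ i, CommRing (A i)] [∀ i, Algebra F (A i)] (k : ℕ)

local notation "B" => ⨂[F] i, A i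

lemma quot_smul {S : Type*} [CommRing S] [Algebra F S] (a : S) (z : S ⊗[F] S) :
    a • (Ideal.Quotient.mk (KaehlerDifferential.ideal F S ^ (k+1)) z)
      = Ideal.Quotient.mk _ ((a ⊗ₜ[F] (1:S)) * z) := by
  show a • Submodule.Quotient.mk z = _
  rw [← Submodule.Quotient.mk_smul]
  have : a • z = (a ⊗ₜ[F] (1:S)) * z := by
    rw [Algebra.smul_def]; congr 1
  rw [this]; rfl

lemma quot_fsmul {S : Type*} [CommRing S] [Algebra F S] (r : F) (z : S ⊗[F] S) :
    Ideal.Quotient.mk (KaehlerDifferential.ideal F S ^ (k+1)) (r • z)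
      = r • Ideal.Quotient.mk _ z :=
  map_smul (Ideal.Quotient.mkₐ F _) r z

lemma phi_surjective : Function.Surjective (phi F s A k) := by
  have key : ∀ b c : B, ∃ w, phi F s A k w = Ideal.Quotient.mk _ (b ⊗ₜ[F] c) := by
    intro b
    induction b using PiTensorProduct.induction_on with
    | smul_tprod r a =>
      intro c
      induction c using PiTensorProduct.induction_on with
      | smul_tprod r' a' =>
        refine ⟨(r * r') • ⨂ₜ[F] i, Ideal.Quotient.mk _ ((a i) ⊗ₜ[F] (a' i)), ?_⟩
        rw [map_smul, phi_mk_tmul, ← quot_fsmul]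
        congr 1
        rw [mul_smul, ← TensorProduct.tmul_smul, TensorProduct.smul_tmul']
      | add c₁ c₂ ih₁ ih₂ =>
        obtain ⟨w₁, h₁⟩ := ih₁
        obtain ⟨w₂, h₂⟩ := ih₂
        exact ⟨w₁ + w₂, by rw [map_add, h₁, h₂, ← map_add, ← TensorProduct.tmul_add]⟩
    | add b₁ b₂ ih₁ ih₂ =>
      intro c
      obtain ⟨w₁, h₁⟩ := ih₁ c
      obtain ⟨w₂, h₂⟩ := ih₂ c
      exact ⟨w₁ + w₂, by rw [map_add, h₁, h₂, ← map_add, ← TensorProduct.add_tmul]⟩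
  intro t
  obtain ⟨z, rfl⟩ := Ideal.Quotient.mk_surjective t
  induction z using TensorProduct.induction_on with
  | zero => exact ⟨0, by simp⟩
  | tmul b c => exact key b c
  | add z₁ z₂ ih₁ ih₂ =>
    obtain ⟨w₁, h₁⟩ := ih₁
    obtain ⟨w₂, h₂⟩ := ih₂
    exact ⟨w₁ + w₂, by rw [map_add, h₁, h₂, ← map_add]⟩

lemma phi_smul (a : ∀ i, A i) (x : ∀ i, JetAlg F (A i) k) :
    phi F s A k (⨂ₜ[F] i, (a i • x i)) = (⨂ₜ[F] i, a i) • phi F s A k (⨂ₜ[F] i, x i) := by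
  choose y hy using fun i => Ideal.Quotient.mk_surjective (x i)
  simp only [← hy]
  have step : ∀ i, a i • (Ideal.Quotient.mk _ (y i) : JetAlg F (A i) k)
      = Ideal.Quotient.mk _ (((a i) ⊗ₜ[F] (1 : A i)) * y i) := fun i => quot_smul F k _ _
  simp only [step]
  rw [phi_mk, phi_mk]
  have : (∏ i, gmap F s A i (((a i) ⊗ₜ[F] (1 : A i)) * y i))
      = ((tprod F a) ⊗ₜ[F] (1 : B)) * ∏ i, gmap F s A i (y i) := by
    simp only [_root_.map_mul]
    rw [Finset.prod_mul_distrib, prod_gmap]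
    rfl
  rw [quot_smul F k, this]


end Main2

/-- Let F be a field of characteristic zero and A₁, …, A_s commutative
F-algebras.  For every k ≥ 1 there is a surjective map of (A₁ ⊗ ⋯ ⊗ A_s)-modules
P^k_{A₁} ⊗[F] ⋯ ⊗[F] P^k_{A_s} → P^k_{A₁ ⊗ ⋯ ⊗ A_s}; the module structures are via the left
tensor factors, so (A₁ ⊗ ⋯ ⊗ A_s)-linearity is expressed by compatibility with the actions of
all pure tensors a₁ ⊗ ⋯ ⊗ a_s. -/
theorem stmt1 (F : Type*) [Field F] [CharZero F] (s : ℕ) (A : Fin s → Type*)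
    [∀ i, CommRing (A i)] [∀ i, Algebra F (A i)] (k : ℕ) (hk : 1 ≤ k) :
    ∃ φ : (⨂[F] i, JetAlg F (A i) k) →ₗ[F] JetAlg F (⨂[F] i, A i) k,
      Function.Surjective φ ∧
      ∀ (a : ∀ i, A i) (x : ∀ i, JetAlg F (A i) k),
        φ (⨂ₜ[F] i, (a i • x i)) = (⨂ₜ[F] i, a i) • φ (⨂ₜ[F] i, x i) := by
  exact ⟨phi F s A k, phi_surjective F s A k, fun a x => phi_smul F s A k a x⟩
end

section
/- Let 𝔤 be a finite-dimensional Lie algebra over a field F of characteristic zero and suppose 𝔤 = 𝔫₋ ⊕ 𝔭 as vector spaces, where 𝔫₋ and 𝔭 are Lie subalgebras. Let ρ : 𝔭 → F be a character and char^k(ρ) = char(ρ) ∩ U^k(𝔤). Then for all k ≥ 1 there is a direct sum decomposition of vector spaces U^k(𝔤) = U^k(𝔫₋) ⊕ char^k(ρ). -/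
open TensorProduct FiniteDimensional

attribute [local instance 100] LieRing.ofAssociativeRing

/-- The `k`-th step of the PBW filtration of the universal enveloping algebra:
the span of products of at most `k` elements of `L`. -/
noncomputable abbrev Uk (F L : Type*) [CommRing F] [LieRing L] [LieAlgebra F L] (k : ℕ) :
    Submodule F (UniversalEnvelopingAlgebra F L) :=
  (Submodule.span F (insert 1 (Set.range (UniversalEnvelopingAlgebra.ι F : L →ₗ⁅F⁆ _)))) ^ k

/-- The linear map `U(𝔤) → V`, `u ↦ u • v`, induced by a `𝔤`-module structure on `V`. -/
noncomputable def actMap (F : Type*) {L V : Type*} [CommRing F] [LieRing L] [LieAlgebra F L]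
    [AddCommGroup V] [Module F V] [LieRingModule L V] [LieModule F L V] (v : V) :
    UniversalEnvelopingAlgebra F L →ₗ[F] V where
  toFun u := UniversalEnvelopingAlgebra.lift F (LieModule.toEnd F L V) u v
  map_add' x y := by simp
  map_smul' c x := by simp

/-- The image in U(𝔤) of the k-th step of the PBW filtration of U(𝔫) for a Lie
subalgebra 𝔫 ⊆ 𝔤 : the span of products of at most k elements of 𝔫. -/
noncomputable abbrev UkSub (F : Type*) {L : Type*} [Field F] [LieRing L] [LieAlgebra F L]
    (n : LieSubalgebra F L) (k : ℕ) : Submodule F (UniversalEnvelopingAlgebra F L) :=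
  (Submodule.span F (insert 1 ((UniversalEnvelopingAlgebra.ι F : L →ₗ⁅F⁆ _) '' (n : Set L)))) ^ k

/-- The left character ideal char(ρ) = U(𝔤)·{x − ρ(x)·1 : x ∈ 𝔭}, as a left ideal of U(𝔤). -/
noncomputable def charIdeal (F : Type*) {L : Type*} [Field F] [LieRing L] [LieAlgebra F L]
    (p : LieSubalgebra F L) (ρ : p →ₗ[F] F) :
    Submodule (UniversalEnvelopingAlgebra F L) (UniversalEnvelopingAlgebra F L) :=
  Submodule.span (UniversalEnvelopingAlgebra F L)
    (Set.range fun x : p => UniversalEnvelopingAlgebra.ι F (x : L) -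
      algebraMap F (UniversalEnvelopingAlgebra F L) (ρ x))
namespace Stmt7Aux
variable (F : Type*) {L : Type*} [Field F] [LieRing L] [LieAlgebra F L]
variable (n p : LieSubalgebra F L) (hcompl : IsCompl n.toSubmodule p.toSubmodule)

/-- Left-multiplication induction principle for enveloping algebras. -/
theorem uea_left_induction {M : Type*} [LieRing M] [LieAlgebra F M]
    (S : Submodule F (UniversalEnvelopingAlgebra F M))
    (h1 : (1 : UniversalEnvelopingAlgebra F M) ∈ S)
    (hmul : ∀ (x : M) (a : UniversalEnvelopingAlgebra F M), a ∈ S →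
      UniversalEnvelopingAlgebra.ι F x * a ∈ S) :
    ∀ u, u ∈ S := by
  have key : ∀ t : TensorAlgebra F M, ∀ a ∈ S,
      UniversalEnvelopingAlgebra.mkAlgHom F M t * a ∈ S := by
    intro t
    induction t using TensorAlgebra.induction with
    | algebraMap r =>
      intro a ha
      rw [AlgHom.commutes, ← Algebra.smul_def]
      exact S.smul_mem r ha
    | ι m =>
      intro a ha
      exact hmul m a ha
    | mul t1 t2 ih1 ih2 =>
      intro a ha
      rw [map_mul, mul_assoc]
      exact ih1 _ (ih2 a ha)
    | add t1 t2 ih1 ih2 =>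
      intro a ha
      rw [map_add, add_mul]
      exact S.add_mem (ih1 a ha) (ih2 a ha)
  intro u
  obtain ⟨t, rfl⟩ : ∃ t, UniversalEnvelopingAlgebra.mkAlgHom F M t = u := Quotient.mk_surjective u
  simpa using key t 1 h1

noncomputable def prN : L →ₗ[F] n :=
  Submodule.linearProjOfIsCompl n.toSubmodule p.toSubmodule hcompl
noncomputable def prP : L →ₗ[F] p :=
  Submodule.linearProjOfIsCompl p.toSubmodule n.toSubmodule hcompl.symm
theorem prN_add_prP (z : L) : (prN F n p hcompl z : L) + (prP F n p hcompl z : L) = z :=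
  Submodule.projection_add_projection_eq_self hcompl z
theorem prN_left (ξ : n) : prN F n p hcompl ↑ξ = ξ :=
  Submodule.linearProjOfIsCompl_apply_left hcompl ξ
theorem prN_right (x : p) : prN F n p hcompl ↑x = 0 :=
  Submodule.projectionOnto_apply_right hcompl x
theorem prP_left (x : p) : prP F n p hcompl ↑x = x :=
  Submodule.linearProjOfIsCompl_apply_left hcompl.symm x
theorem prP_right (ξ : n) : prP F n p hcompl ↑ξ = 0 :=
  Submodule.projectionOnto_apply_right hcompl.symm ξ
noncomputable def nu : n →ₗ[F] p →ₗ[F] n :=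
  LinearMap.mk₂ F (fun ξ x => prN F n p hcompl ⁅(x : L), (ξ : L)⁆)
    (fun ξ η x => by rw [← map_add, ← lie_add]; rfl)
    (fun c ξ x => by rw [← map_smul, ← lie_smul]; rfl)
    (fun ξ x y => by rw [← map_add, ← add_lie]; rfl)
    (fun c ξ x => by rw [← map_smul, ← smul_lie]; rfl)
noncomputable def qq : n →ₗ[F] p →ₗ[F] p :=
  LinearMap.mk₂ F (fun ξ x => prP F n p hcompl ⁅(x : L), (ξ : L)⁆)
    (fun ξ η x => by rw [← map_add, ← lie_add]; rfl)
    (fun c ξ x => by rw [← map_smul, ← lie_smul]; rfl)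
    (fun ξ x y => by rw [← map_add, ← add_lie]; rfl)
    (fun c ξ x => by rw [← map_smul, ← smul_lie]; rfl)
theorem nu_apply (ξ : n) (x : p) : nu F n p hcompl ξ x = prN F n p hcompl ⁅(x : L), (ξ : L)⁆ := rfl
theorem qq_apply (ξ : n) (x : p) : qq F n p hcompl ξ x = prP F n p hcompl ⁅(x : L), (ξ : L)⁆ := rfl
theorem decomp (x : p) (ξ : n) :
    ⁅(x : L), (ξ : L)⁆ = ↑(nu F n p hcompl ξ x) + ↑(qq F n p hcompl ξ x) := by
  rw [nu_apply, qq_apply]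
  exact (Submodule.projection_add_projection_eq_self hcompl _).symm

theorem prN_nb (a : n) (b : p) : prN F n p hcompl (↑a + ↑b) = a := by
  rw [map_add, prN_left, prN_right, add_zero]
theorem prP_nb (a : n) (b : p) : prP F n p hcompl (↑a + ↑b) = b := by
  rw [map_add, prP_left, prP_right, zero_add]

section Jacobi

variable (ξ η : n) (x y : p)

theorem key_nn :
    ⁅(x : L), (↑⁅ξ, η⁆ : L)⁆ =
      ↑(⁅nu F n p hcompl ξ x, η⁆ + nu F n p hcompl η (qq F n p hcompl ξ x)
        - ⁅nu F n p hcompl η x, ξ⁆ - nu F n p hcompl ξ (qq F n p hcompl η x)) +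
      ↑(qq F n p hcompl η (qq F n p hcompl ξ x) - qq F n p hcompl ξ (qq F n p hcompl η x)) := by
  have h1 : ⁅(x : L), (↑⁅ξ, η⁆ : L)⁆ = ⁅⁅(x:L), (ξ:L)⁆, (η:L)⁆ + ⁅(ξ:L), ⁅(x:L), (η:L)⁆⁆ := by
    rw [LieSubalgebra.coe_bracket, leibniz_lie]
  rw [h1, decomp F n p hcompl x ξ, decomp F n p hcompl x η, add_lie, lie_add]
  rw [show ⁅((nu F n p hcompl ξ x : n) : L), (η : L)⁆ = ↑⁅nu F n p hcompl ξ x, η⁆ from rfl]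
  rw [decomp F n p hcompl (qq F n p hcompl ξ x) η]
  rw [show ⁅(ξ : L), ((nu F n p hcompl η x : n) : L)⁆ = -↑⁅nu F n p hcompl η x, ξ⁆ by
    rw [← lie_skew]; rfl]
  rw [show ⁅(ξ : L), ((qq F n p hcompl η x : p) : L)⁆ =
      -(↑(nu F n p hcompl ξ (qq F n p hcompl η x)) + ↑(qq F n p hcompl ξ (qq F n p hcompl η x)) : L) by
    rw [← lie_skew, decomp F n p hcompl (qq F n p hcompl η x) ξ]]
  push_cast
  abel

theorem nu_lie_nn :
    nu F n p hcompl ⁅ξ, η⁆ x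
      = ⁅nu F n p hcompl ξ x, η⁆ + nu F n p hcompl η (qq F n p hcompl ξ x)
        - ⁅nu F n p hcompl η x, ξ⁆ - nu F n p hcompl ξ (qq F n p hcompl η x) := by
  rw [nu_apply, key_nn, prN_nb]

theorem qq_lie_nn :
    qq F n p hcompl ⁅ξ, η⁆ x
      = qq F n p hcompl η (qq F n p hcompl ξ x) - qq F n p hcompl ξ (qq F n p hcompl η x) := by
  rw [qq_apply, key_nn, prP_nb]

theorem key_pp :
    ⁅((⁅x, y⁆ : p) : L), (ξ : L)⁆ =
      ↑(nu F n p hcompl (nu F n p hcompl ξ y) x - nu F n p hcompl (nu F n p hcompl ξ x) y) +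
      ↑(qq F n p hcompl (nu F n p hcompl ξ y) x - qq F n p hcompl (nu F n p hcompl ξ x) y
        + ⁅x, qq F n p hcompl ξ y⁆ - ⁅y, qq F n p hcompl ξ x⁆) := by
  have h1 : ⁅((⁅x, y⁆ : p) : L), (ξ : L)⁆
      = ⁅(x:L), ⁅(y:L), (ξ:L)⁆⁆ - ⁅(y:L), ⁅(x:L), (ξ:L)⁆⁆ := by
    rw [LieSubalgebra.coe_bracket, lie_lie]
  rw [h1, decomp F n p hcompl y ξ, decomp F n p hcompl x ξ, lie_add, lie_add]
  rw [decomp F n p hcompl x (nu F n p hcompl ξ y), decomp F n p hcompl y (nu F n p hcompl ξ x)]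
  rw [show ⁅(x : L), ((qq F n p hcompl ξ y : p) : L)⁆ = ↑⁅x, qq F n p hcompl ξ y⁆ from rfl]
  rw [show ⁅(y : L), ((qq F n p hcompl ξ x : p) : L)⁆ = ↑⁅y, qq F n p hcompl ξ x⁆ from rfl]
  push_cast
  abel

theorem nu_lie_pp :
    nu F n p hcompl ξ ⁅x, y⁆
      = nu F n p hcompl (nu F n p hcompl ξ y) x - nu F n p hcompl (nu F n p hcompl ξ x) y := by
  rw [nu_apply, key_pp, prN_nb]

theorem qq_lie_pp :
    qq F n p hcompl ξ ⁅x, y⁆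
      = qq F n p hcompl (nu F n p hcompl ξ y) x - qq F n p hcompl (nu F n p hcompl ξ x) y
        + ⁅x, qq F n p hcompl ξ y⁆ - ⁅y, qq F n p hcompl ξ x⁆ := by
  rw [qq_apply, key_pp, prP_nb]


end Jacobi

section Rep

open UniversalEnvelopingAlgebra

theorem iota_add {M : Type*} [LieRing M] [LieAlgebra F M] (a b : M) :
    (ι F (a + b) : UniversalEnvelopingAlgebra F M) = ι F a + ι F b :=
  map_add _ a b

theorem iota_sub {M : Type*} [LieRing M] [LieAlgebra F M] (a b : M) :
    (ι F (a - b) : UniversalEnvelopingAlgebra F M) = ι F a - ι F b :=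
  map_sub _ a b

theorem iota_smul {M : Type*} [LieRing M] [LieAlgebra F M] (c : F) (a : M) :
    (ι F (c • a) : UniversalEnvelopingAlgebra F M) = c • ι F a :=
  map_smul _ c a

/-- The second-component operator. -/
noncomputable def Dmap (ξ : n) :
    (UniversalEnvelopingAlgebra F n × (p →ₗ[F] UniversalEnvelopingAlgebra F n))
      →ₗ[F] (p →ₗ[F] UniversalEnvelopingAlgebra F n) where
  toFun v :=
    { toFun := fun x => ι F ξ * v.2 x + v.2 (qq F n p hcompl ξ x)
        + ι F (nu F n p hcompl ξ x) * v.1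
      map_add' := fun x y => by
        simp only [map_add, iota_add F, mul_add, add_mul, LinearMap.map_add]
        abel
      map_smul' := fun c x => by
        simp only [map_smul, iota_smul F, LinearMap.map_smul, mul_smul_comm, smul_mul_assoc,
          RingHom.id_apply, smul_add] }
  map_add' v w := by
    ext x
    simp only [LinearMap.coe_mk, AddHom.coe_mk, Prod.snd_add, Prod.fst_add,
      LinearMap.add_apply, mul_add, add_mul]
    abel
  map_smul' c v := by
    ext x
    simp only [LinearMap.coe_mk, AddHom.coe_mk, Prod.smul_snd, Prod.smul_fst,
      LinearMap.smul_apply, mul_smul_comm, smul_mul_assoc, RingHom.id_apply, smul_add]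

theorem Dmap_apply (ξ : n) (v) (x : p) :
    Dmap F n p hcompl ξ v x = ι F ξ * v.2 x + v.2 (qq F n p hcompl ξ x)
        + ι F (nu F n p hcompl ξ x) * v.1 := rfl

/-- The action of `n` on `V`. -/
noncomputable def Rlin :
    n →ₗ[F] Module.End F
      (UniversalEnvelopingAlgebra F n × (p →ₗ[F] UniversalEnvelopingAlgebra F n)) where
  toFun ξ :=
    { toFun := fun v => (ι F ξ * v.1, Dmap F n p hcompl ξ v)
      map_add' := fun v w => by
        simp only [Prod.fst_add, mul_add, map_add]
        rfl
      map_smul' := fun c v => by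
        simp only [Prod.smul_fst, mul_smul_comm, map_smul, RingHom.id_apply]
        rfl }
  map_add' ξ η := by
    apply LinearMap.ext; intro v
    refine Prod.ext ?_ ?_
    · simp only [LinearMap.coe_mk, AddHom.coe_mk, iota_add F, add_mul, LinearMap.add_apply,
        Prod.fst_add]
    · ext x
      simp only [LinearMap.coe_mk, AddHom.coe_mk, Dmap_apply, map_add, iota_add F,
        LinearMap.map_add, add_mul, LinearMap.add_apply, Prod.snd_add]
      abel
  map_smul' c ξ := by
    apply LinearMap.ext; intro v
    refine Prod.ext ?_ ?_
    · simp only [LinearMap.coe_mk, AddHom.coe_mk, iota_smul F, smul_mul_assoc,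
        RingHom.id_apply, LinearMap.smul_apply, Prod.smul_fst]
    · ext x
      simp only [LinearMap.coe_mk, AddHom.coe_mk, Dmap_apply, map_smul, iota_smul F,
        LinearMap.map_smul, smul_mul_assoc, RingHom.id_apply, LinearMap.smul_apply,
        Prod.smul_snd, mul_smul_comm, smul_add]

theorem Rlin_apply_fst (ξ : n) (v) : ((Rlin F n p hcompl ξ) v).1 = ι F ξ * v.1 := rfl
theorem Rlin_apply_snd (ξ : n) (v) : ((Rlin F n p hcompl ξ) v).2 = Dmap F n p hcompl ξ v := rfl

theorem iota_bracket (ξ η : n) :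
    (ι F ⁅ξ, η⁆ : UniversalEnvelopingAlgebra F n) = ι F ξ * ι F η - ι F η * ι F ξ := by
  rw [LieHom.map_lie, Ring.lie_def]

theorem R_lie (ξ η : n) :
    Rlin F n p hcompl ⁅ξ, η⁆ = ⁅Rlin F n p hcompl ξ, Rlin F n p hcompl η⁆ := by
  rw [Ring.lie_def]
  apply LinearMap.ext; intro v
  refine Prod.ext ?_ ?_
  · simp only [LinearMap.sub_apply, Module.End.mul_apply, Prod.fst_sub,
      Rlin_apply_fst, iota_bracket]
    noncomm_ring
  · ext x
    simp only [LinearMap.sub_apply, Module.End.mul_apply, Prod.snd_sub, LinearMap.sub_apply,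
      Rlin_apply_snd, Rlin_apply_fst, Dmap_apply, nu_lie_nn, qq_lie_nn, map_add, map_sub,
      iota_add F, iota_sub F, LinearMap.map_add, LinearMap.map_sub, iota_bracket]
    noncomm_ring

/-- The representation of `n` on `V` as a Lie algebra morphism. -/
noncomputable def RHom :
    n →ₗ⁅F⁆ Module.End F
      (UniversalEnvelopingAlgebra F n × (p →ₗ[F] UniversalEnvelopingAlgebra F n)) :=
  { Rlin F n p hcompl with
    map_lie' := fun {ξ η} => R_lie F n p hcompl ξ η }


variable (ρ : p →ₗ[F] F)

/-- The `U(n)`-module structure on `V`. -/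
noncomputable def Psi0 :
    UniversalEnvelopingAlgebra F n →ₐ[F] Module.End F
      (UniversalEnvelopingAlgebra F n × (p →ₗ[F] UniversalEnvelopingAlgebra F n)) :=
  UniversalEnvelopingAlgebra.lift F (RHom F n p hcompl)

/-- The cyclic vector. -/
noncomputable def v0 :
    UniversalEnvelopingAlgebra F n × (p →ₗ[F] UniversalEnvelopingAlgebra F n) :=
  (1, (Algebra.linearMap F (UniversalEnvelopingAlgebra F n)).comp ρ)

/-- `a ↦ a • v0`. -/
noncomputable def Theta :
    UniversalEnvelopingAlgebra F n →ₗ[F]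
      UniversalEnvelopingAlgebra F n × (p →ₗ[F] UniversalEnvelopingAlgebra F n) :=
  (LinearMap.applyₗ (v0 F n p ρ)).comp (Psi0 F n p hcompl).toLinearMap

theorem Theta_apply (a) : Theta F n p hcompl ρ a = Psi0 F n p hcompl a (v0 F n p ρ) := rfl

theorem Theta_one : Theta F n p hcompl ρ 1 = v0 F n p ρ := by
  rw [Theta_apply, map_one, Module.End.one_apply]

theorem Theta_iota_mul (ξ : n) (a) :
    Theta F n p hcompl ρ (ι F ξ * a) = Rlin F n p hcompl ξ (Theta F n p hcompl ρ a) := by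
  have h : Psi0 F n p hcompl (ι F ξ) = Rlin F n p hcompl ξ :=
    UniversalEnvelopingAlgebra.lift_ι_apply F (RHom F n p hcompl) ξ
  rw [Theta_apply, map_mul, Module.End.mul_apply, h, ← Theta_apply]

theorem Theta_fst (a) : (Theta F n p hcompl ρ a).1 = a := by
  have := uea_left_induction F
    (LinearMap.eqLocus ((LinearMap.fst F _ _).comp (Theta F n p hcompl ρ)) LinearMap.id)
    ?_ ?_ a
  · simpa [LinearMap.mem_eqLocus] using this
  · simp only [LinearMap.mem_eqLocus, LinearMap.comp_apply, LinearMap.fst_apply,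
      LinearMap.id_apply, Theta_one]
    rfl
  · intro ξ b hb
    simp only [LinearMap.mem_eqLocus, LinearMap.comp_apply, LinearMap.fst_apply,
      LinearMap.id_apply] at hb ⊢
    rw [Theta_iota_mul, Rlin_apply_fst, hb]

/-- The operator of `x ∈ p` on `U(n)`. -/
noncomputable def T : p →ₗ[F] Module.End F (UniversalEnvelopingAlgebra F n) :=
  ((LinearMap.snd F (UniversalEnvelopingAlgebra F n)
    (p →ₗ[F] UniversalEnvelopingAlgebra F n)).comp (Theta F n p hcompl ρ)).flip

theorem T_apply (x : p) (a) : T F n p hcompl ρ x a = (Theta F n p hcompl ρ a).2 x := rfl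

theorem T_one (x : p) :
    T F n p hcompl ρ x 1 = algebraMap F (UniversalEnvelopingAlgebra F n) (ρ x) := by
  rw [T_apply, Theta_one]; rfl

theorem T_iota_mul (x : p) (ξ : n) (a) :
    T F n p hcompl ρ x (ι F ξ * a)
      = ι F ξ * T F n p hcompl ρ x a + T F n p hcompl ρ (qq F n p hcompl ξ x) a
        + ι F (nu F n p hcompl ξ x) * a := by
  rw [T_apply, Theta_iota_mul, Rlin_apply_snd, Dmap_apply, ← T_apply, ← T_apply, Theta_fst]

theorem T_comm (hchar : ∀ x y : p, ρ ⁅x, y⁆ = 0) (x y : p) (a) :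
    T F n p hcompl ρ x (T F n p hcompl ρ y a) - T F n p hcompl ρ y (T F n p hcompl ρ x a)
      = T F n p hcompl ρ ⁅x, y⁆ a := by
  have main : ∀ b, b ∈ ⨅ (x : p), ⨅ (y : p),
      LinearMap.eqLocus ((T F n p hcompl ρ x).comp (T F n p hcompl ρ y)
        - (T F n p hcompl ρ y).comp (T F n p hcompl ρ x)) (T F n p hcompl ρ ⁅x, y⁆) := by
    apply uea_left_induction
    · simp only [Submodule.mem_iInf, LinearMap.mem_eqLocus, LinearMap.sub_apply,
        LinearMap.comp_apply]
      intro x y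
      simp only [T_one, hchar, map_zero, Algebra.algebraMap_eq_smul_one, map_smul, smul_smul]
      rw [mul_comm (ρ x) (ρ y), sub_self]
    · intro ξ a ha
      simp only [Submodule.mem_iInf, LinearMap.mem_eqLocus, LinearMap.sub_apply,
        LinearMap.comp_apply] at ha ⊢
      intro x y
      simp only [T_iota_mul, map_add, map_sub, map_neg, LinearMap.add_apply,
        LinearMap.sub_apply, LinearMap.neg_apply, nu_lie_pp, qq_lie_pp, iota_add F, iota_sub F,
        add_mul, sub_mul, mul_add, mul_sub, ← ha]
      abel
  have := main a
  simp only [Submodule.mem_iInf, LinearMap.mem_eqLocus, LinearMap.sub_apply,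
    LinearMap.comp_apply] at this
  exact this x y

/-- The linear map underlying the `L`-action on `U(n)`. -/
noncomputable def Philin : L →ₗ[F] Module.End F (UniversalEnvelopingAlgebra F n) :=
  ((Algebra.lmul F (UniversalEnvelopingAlgebra F n)).toLinearMap.comp
    ((UniversalEnvelopingAlgebra.ι F (L := n)).toLinearMap.comp (prN F n p hcompl)))
  + ((T F n p hcompl ρ).comp (prP F n p hcompl))

theorem lmul_app {B : Type*} [Ring B] [Algebra F B] (a b : B) :
    Algebra.lmul F B a b = a * b := rfl

theorem Philin_apply (z : L) :
    Philin F n p hcompl ρ z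
      = Algebra.lmul F (UniversalEnvelopingAlgebra F n) (ι F (prN F n p hcompl z))
        + T F n p hcompl ρ (prP F n p hcompl z) := rfl

theorem Philin_n (ξ : n) :
    Philin F n p hcompl ρ ↑ξ = Algebra.lmul F (UniversalEnvelopingAlgebra F n) (ι F ξ) := by
  rw [Philin_apply, prN_left, prP_right, map_zero (T F n p hcompl ρ), add_zero]

theorem Philin_p (x : p) : Philin F n p hcompl ρ ↑x = T F n p hcompl ρ x := by
  rw [Philin_apply, prP_left, prN_right, map_zero (UniversalEnvelopingAlgebra.ι F (L := n)), map_zero, zero_add]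

theorem Phi_case_nn (ξ η : n) :
    Philin F n p hcompl ρ ⁅(ξ : L), (η : L)⁆
      = ⁅Philin F n p hcompl ρ ↑ξ, Philin F n p hcompl ρ ↑η⁆ := by
  rw [show ⁅(ξ : L), (η : L)⁆ = ↑⁅ξ, η⁆ from rfl, Philin_n, Philin_n, Philin_n,
    iota_bracket, map_sub, map_mul, map_mul, Ring.lie_def]

theorem Phi_case_pn (x : p) (ξ : n) :
    Philin F n p hcompl ρ ⁅(x : L), (ξ : L)⁆
      = ⁅Philin F n p hcompl ρ ↑x, Philin F n p hcompl ρ ↑ξ⁆ := by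
  rw [decomp F n p hcompl x ξ, map_add, Philin_n, Philin_p, Philin_n, Philin_p, Ring.lie_def]
  apply LinearMap.ext; intro a
  simp only [LinearMap.add_apply, LinearMap.sub_apply, Module.End.mul_apply, lmul_app,
    T_iota_mul]
  abel

theorem Phi_case_pp (hchar : ∀ x y : p, ρ ⁅x, y⁆ = 0) (x y : p) :
    Philin F n p hcompl ρ ⁅(x : L), (y : L)⁆
      = ⁅Philin F n p hcompl ρ ↑x, Philin F n p hcompl ρ ↑y⁆ := by
  rw [show ⁅(x : L), (y : L)⁆ = ↑⁅x, y⁆ from rfl, Philin_p, Philin_p, Philin_p, Ring.lie_def]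
  apply LinearMap.ext; intro a
  simp only [LinearMap.sub_apply, Module.End.mul_apply]
  exact (T_comm F n p hcompl ρ hchar x y a).symm


theorem Philin_lie (hchar : ∀ x y : p, ρ ⁅x, y⁆ = 0) (z w : L) :
    Philin F n p hcompl ρ ⁅z, w⁆ = ⁅Philin F n p hcompl ρ z, Philin F n p hcompl ρ w⁆ := by
  obtain ⟨a, b, rfl⟩ : ∃ (a : n) (b : p), z = ↑a + ↑b :=
    ⟨prN F n p hcompl z, prP F n p hcompl z, (prN_add_prP F n p hcompl z).symm⟩
  obtain ⟨c, d, rfl⟩ : ∃ (c : n) (d : p), w = ↑c + ↑d :=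
    ⟨prN F n p hcompl w, prP F n p hcompl w, (prN_add_prP F n p hcompl w).symm⟩
  have had : Philin F n p hcompl ρ ⁅(a : L), (d : L)⁆
      = ⁅Philin F n p hcompl ρ ↑a, Philin F n p hcompl ρ ↑d⁆ := by
    rw [← lie_skew ((a : L)) ((d : L)), map_neg, Phi_case_pn F n p hcompl ρ d a]
    exact lie_skew _ _
  simp only [add_lie, lie_add, map_add]
  rw [Phi_case_nn, Phi_case_pn, Phi_case_pp F n p hcompl ρ hchar, had]

/-- The action of `L` on `U(n)` as a Lie algebra morphism. -/
noncomputable def Phi (hchar : ∀ x y : p, ρ ⁅x, y⁆ = 0) :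
    L →ₗ⁅F⁆ Module.End F (UniversalEnvelopingAlgebra F n) :=
  { Philin F n p hcompl ρ with
    map_lie' := fun {z w} => Philin_lie F n p hcompl ρ hchar z w }

/-- The `U(L)`-module structure on `U(n)`. -/
noncomputable def Psi (hchar : ∀ x y : p, ρ ⁅x, y⁆ = 0) :
    UniversalEnvelopingAlgebra F L →ₐ[F] Module.End F (UniversalEnvelopingAlgebra F n) :=
  UniversalEnvelopingAlgebra.lift F (Phi F n p hcompl ρ hchar)

theorem Psi_iota (hchar : ∀ x y : p, ρ ⁅x, y⁆ = 0) (z : L) :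
    Psi F n p hcompl ρ hchar (ι F z) = Philin F n p hcompl ρ z :=
  UniversalEnvelopingAlgebra.lift_ι_apply F (Phi F n p hcompl ρ hchar) z

/-- `u ↦ (Ψ u) 1`. -/
noncomputable def theta (hchar : ∀ x y : p, ρ ⁅x, y⁆ = 0) :
    UniversalEnvelopingAlgebra F L →ₗ[F] UniversalEnvelopingAlgebra F n :=
  (LinearMap.applyₗ (1 : UniversalEnvelopingAlgebra F n)).comp
    (Psi F n p hcompl ρ hchar).toLinearMap

theorem theta_apply (hchar : ∀ x y : p, ρ ⁅x, y⁆ = 0) (u) :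
    theta F n p hcompl ρ hchar u = Psi F n p hcompl ρ hchar u 1 := rfl

theorem theta_char (hchar : ∀ x y : p, ρ ⁅x, y⁆ = 0) :
    ∀ u ∈ charIdeal F p ρ, theta F n p hcompl ρ hchar u = 0 := by
  intro u hu
  induction hu using Submodule.span_induction with
  | mem x hx =>
    obtain ⟨y, rfl⟩ := hx
    rw [map_sub, sub_eq_zero, theta_apply, theta_apply, Psi_iota, Philin_p, T_one,
      AlgHom.commutes, Module.algebraMap_end_apply, Algebra.algebraMap_eq_smul_one]
  | zero => exact map_zero _
  | add x y hx hy ihx ihy => rw [map_add, ihx, ihy, add_zero]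
  | smul r v hv ihv =>
    rw [smul_eq_mul, theta_apply, map_mul, Module.End.mul_apply,
      ← theta_apply F n p hcompl ρ hchar v, ihv, map_zero]

/-- The canonical algebra morphism `U(n) → U(L)`. -/
noncomputable def jmap : UniversalEnvelopingAlgebra F n →ₐ[F] UniversalEnvelopingAlgebra F L :=
  UniversalEnvelopingAlgebra.lift F ((UniversalEnvelopingAlgebra.ι F).comp n.incl)

theorem jmap_iota (ξ : n) : jmap F n (ι F ξ) = ι F (ξ : L) :=
  UniversalEnvelopingAlgebra.lift_ι_apply F _ ξ

theorem Psi_comp_jmap (hchar : ∀ x y : p, ρ ⁅x, y⁆ = 0) :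
    (Psi F n p hcompl ρ hchar).comp (jmap F n)
      = Algebra.lmul F (UniversalEnvelopingAlgebra F n) := by
  apply UniversalEnvelopingAlgebra.hom_ext
  apply LieHom.ext; intro ξ
  show Psi F n p hcompl ρ hchar (jmap F n (ι F ξ))
    = Algebra.lmul F (UniversalEnvelopingAlgebra F n) (ι F ξ)
  rw [jmap_iota, Psi_iota, Philin_n]

theorem theta_jmap (hchar : ∀ x y : p, ρ ⁅x, y⁆ = 0) (a) :
    theta F n p hcompl ρ hchar (jmap F n a) = a := by
  have h : Psi F n p hcompl ρ hchar (jmap F n a)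
      = Algebra.lmul F (UniversalEnvelopingAlgebra F n) a := by
    rw [← AlgHom.comp_apply, Psi_comp_jmap]
  rw [theta_apply, h, lmul_app, mul_one]

/-- The span of `{1} ∪ ι(n)` inside `U(L)`. -/
noncomputable def spanGn : Submodule F (UniversalEnvelopingAlgebra F L) :=
  Submodule.span F (insert 1
    ((UniversalEnvelopingAlgebra.ι F : L →ₗ⁅F⁆ UniversalEnvelopingAlgebra F L) '' (n : Set L)))

theorem UkSub_eq (k : ℕ) : UkSub F n k = spanGn F n ^ k := rfl

theorem UkSub_le_range (k : ℕ) :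
    spanGn F n ^ k ≤ Subalgebra.toSubmodule (jmap F n).range := by
  induction k with
  | zero =>
    rw [pow_zero]
    exact Submodule.one_le.mpr (Subalgebra.one_mem _)
  | succ k ih =>
    rw [pow_succ]
    refine Submodule.mul_le.mpr fun a ha b hb => ?_
    have hb' : b ∈ Subalgebra.toSubmodule (jmap F n).range := by
      refine Submodule.span_le.mpr ?_ hb
      rintro x (rfl | ⟨y, hy, rfl⟩)
      · exact Subalgebra.one_mem _
      · exact ⟨UniversalEnvelopingAlgebra.ι F (⟨y, hy⟩ : n), jmap_iota F n ⟨y, hy⟩⟩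
    exact Subalgebra.mul_mem _ (ih ha) hb'

end Rep

section Sup

open UniversalEnvelopingAlgebra

variable (ρ : p →ₗ[F] F)

/-- The span of `{1} ∪ ι(L)` inside `U(L)`. -/
noncomputable def spanG : Submodule F (UniversalEnvelopingAlgebra F L) :=
  Submodule.span F (insert 1
    (Set.range (UniversalEnvelopingAlgebra.ι F : L →ₗ⁅F⁆ UniversalEnvelopingAlgebra F L)))

theorem Uk_eq (k : ℕ) : Uk F L k = spanG F (L := L) ^ k := rfl

theorem one_mem_G : (1 : UniversalEnvelopingAlgebra F L) ∈ spanG F (L := L) :=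
  Submodule.subset_span (Set.mem_insert _ _)

theorem iota_mem_G (z : L) : ι F z ∈ spanG F (L := L) :=
  Submodule.subset_span (Set.mem_insert_of_mem _ ⟨z, rfl⟩)

theorem one_mem_Gn : (1 : UniversalEnvelopingAlgebra F L) ∈ spanGn F n :=
  Submodule.subset_span (Set.mem_insert _ _)

theorem iota_mem_Gn (ξ : n) : ι F (ξ : L) ∈ spanGn F n :=
  Submodule.subset_span (Set.mem_insert_of_mem _ ⟨(ξ : L), ξ.2, rfl⟩)

theorem spanGn_le_spanG : spanGn F n ≤ spanG F (L := L) :=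
  Submodule.span_mono (Set.insert_subset_insert (by rintro _ ⟨z, hz, rfl⟩; exact ⟨z, rfl⟩))

theorem powLePow {S T : Submodule F (UniversalEnvelopingAlgebra F L)} (h : S ≤ T) (k : ℕ) :
    S ^ k ≤ T ^ k := by
  induction k with
  | zero => rw [pow_zero, pow_zero]
  | succ k ih =>
    rw [pow_succ, pow_succ]
    exact mul_le_mul' ih h

theorem powLeSucc {S : Submodule F (UniversalEnvelopingAlgebra F L)}
    (hS : (1 : UniversalEnvelopingAlgebra F L) ∈ S) (k : ℕ) : S ^ k ≤ S ^ (k + 1) := by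
  rw [pow_succ]
  conv_lhs => rw [← mul_one (S ^ k)]
  exact mul_le_mul' le_rfl (Submodule.one_le.mpr hS)

theorem comm_G (x : L) : ∀ a ∈ spanG F (L := L), ι F x * a - a * ι F x ∈ spanG F (L := L) := by
  intro a ha
  induction ha using Submodule.span_induction with
  | mem g hg =>
    rcases Set.mem_insert_iff.mp hg with rfl | ⟨z, rfl⟩
    · simpa using Submodule.zero_mem _
    · have h : ι F x * ι F z - ι F z * ι F x = ι F ⁅x, z⁆ := by
        rw [LieHom.map_lie, Ring.lie_def]
      rw [h]
      exact iota_mem_G F ⁅x, z⁆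
  | zero => simpa using Submodule.zero_mem _
  | add a b ha hb iha ihb =>
    have h : ι F x * (a + b) - (a + b) * ι F x
        = (ι F x * a - a * ι F x) + (ι F x * b - b * ι F x) := by noncomm_ring
    rw [h]; exact add_mem iha ihb
  | smul c a ha iha =>
    have h : ι F x * (c • a) - (c • a) * ι F x = c • (ι F x * a - a * ι F x) := by
      rw [mul_smul_comm, smul_mul_assoc, smul_sub]
    rw [h]; exact Submodule.smul_mem _ _ iha

theorem comm_Uk (x : L) (k : ℕ) :
    ∀ w ∈ spanG F (L := L) ^ k, ι F x * w - w * ι F x ∈ spanG F (L := L) ^ k := by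
  induction k with
  | zero =>
    intro w hw
    rw [pow_zero] at hw ⊢
    obtain ⟨c, rfl⟩ := Submodule.mem_one.mp hw
    have h : ι F x * algebraMap F _ c - algebraMap F _ c * ι F x = 0 := by
      rw [Algebra.commutes c (ι F x), sub_self]
    rw [h]; exact Submodule.zero_mem _
  | succ k ih =>
    intro w hw
    rw [pow_succ] at hw
    refine Submodule.mul_induction_on hw (fun a ha b hb => ?_) (fun a b iha ihb => ?_)
    · have key : ι F x * (a * b) - (a * b) * ι F x
          = (ι F x * a - a * ι F x) * b + a * (ι F x * b - b * ι F x) := by noncomm_ring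
      rw [key, pow_succ]
      exact add_mem (Submodule.mul_mem_mul (ih a ha) hb)
        (Submodule.mul_mem_mul ha (comm_G F x b hb))
    · have key : ι F x * (a + b) - (a + b) * ι F x
          = (ι F x * a - a * ι F x) + (ι F x * b - b * ι F x) := by noncomm_ring
      rw [key]; exact add_mem iha ihb

/-- The span of the generators of the character ideal. -/
noncomputable def sRho : Submodule F (UniversalEnvelopingAlgebra F L) :=
  Submodule.span F (Set.range fun x : p =>
    UniversalEnvelopingAlgebra.ι F (x : L) -
      algebraMap F (UniversalEnvelopingAlgebra F L) (ρ x))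

theorem sRho_le_char : sRho F p ρ ≤ (charIdeal F p ρ).restrictScalars F :=
  Submodule.span_le.mpr (by rintro _ ⟨x, rfl⟩; exact Submodule.subset_span ⟨x, rfl⟩)

theorem sRho_le_G : sRho F p ρ ≤ spanG F (L := L) := by
  refine Submodule.span_le.mpr ?_
  rintro _ ⟨x, rfl⟩
  refine sub_mem (iota_mem_G F _) ?_
  rw [Algebra.algebraMap_eq_smul_one]
  exact Submodule.smul_mem _ _ (one_mem_G F)

include hcompl in
theorem main_claim (m : ℕ) :
    spanG F (L := L) ^ (m + 1) ≤ spanGn F n ^ (m + 1) ⊔ (spanG F (L := L) ^ m * sRho F p ρ) := by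
  induction m with
  | zero =>
    rw [pow_one, pow_one, pow_zero, one_mul]
    refine Submodule.span_le.mpr ?_
    rintro g (rfl | ⟨z, rfl⟩)
    · exact Submodule.mem_sup_left (one_mem_Gn F n)
    · have hz : ι F z = ι F ((prN F n p hcompl z : n) : L)
          + ((ι F ((prP F n p hcompl z : p) : L)
              - algebraMap F _ (ρ (prP F n p hcompl z)))
            + algebraMap F _ (ρ (prP F n p hcompl z))) := by
        conv_lhs => rw [← prN_add_prP F n p hcompl z]
        rw [iota_add F]
        abel
      rw [hz]
      refine add_mem (Submodule.mem_sup_left (iota_mem_Gn F n _))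
        (add_mem (Submodule.mem_sup_right (Submodule.subset_span ⟨prP F n p hcompl z, rfl⟩))
          (Submodule.mem_sup_left ?_))
      rw [Algebra.algebraMap_eq_smul_one]
      exact Submodule.smul_mem _ _ (one_mem_Gn F n)
  | succ m ih =>
    rw [pow_succ']
    refine Submodule.mul_le.mpr fun g hg w hw => ?_
    obtain ⟨w1, hw1, w2, hw2, rfl⟩ := Submodule.mem_sup.mp (ih hw)
    rw [mul_add]
    refine add_mem ?_ ?_
    swap
    · refine Submodule.mem_sup_right ?_
      have h1 : g * w2 ∈ spanG F (L := L) * (spanG F (L := L) ^ m * sRho F p ρ) :=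
        Submodule.mul_mem_mul hg hw2
      have heq : spanG F (L := L) * (spanG F (L := L) ^ m * sRho F p ρ)
          = spanG F (L := L) ^ (m + 1) * sRho F p ρ := by
        rw [← mul_assoc, ← pow_succ']
      rwa [heq] at h1
    · induction hg using Submodule.span_induction with
      | mem g hg =>
        rcases Set.mem_insert_iff.mp hg with rfl | ⟨z, rfl⟩
        · rw [one_mul]
          exact Submodule.mem_sup_left (powLeSucc F (one_mem_Gn F n) (m + 1) hw1)
        · have hw1' : w1 ∈ spanG F (L := L) ^ (m + 1) := powLePow F (spanGn_le_spanG F n) _ hw1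
          have hdec : ι F z * w1 = ι F ((prN F n p hcompl z : n) : L) * w1
              + ((ι F ((prP F n p hcompl z : p) : L) * w1
                  - w1 * ι F ((prP F n p hcompl z : p) : L))
                + (w1 * (ι F ((prP F n p hcompl z : p) : L)
                    - algebraMap F _ (ρ (prP F n p hcompl z)))
                  + ρ (prP F n p hcompl z) • w1)) := by
            conv_lhs => rw [← prN_add_prP F n p hcompl z]
            rw [iota_add F, add_mul, mul_sub, Algebra.algebraMap_eq_smul_one, mul_smul_comm,
              mul_one]
            abel
          rw [hdec]
          refine add_mem ?_ (add_mem ?_ (add_mem ?_ ?_))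
          · refine Submodule.mem_sup_left ?_
            have h2 : ι F ((prN F n p hcompl z : n) : L) * w1
                ∈ spanGn F n * spanGn F n ^ (m + 1) :=
              Submodule.mul_mem_mul (iota_mem_Gn F n _) hw1
            rwa [← pow_succ'] at h2
          · have hcomm := comm_Uk F (((prP F n p hcompl z : p)) : L) (m + 1) w1 hw1'
            exact (sup_le_sup (powLeSucc F (one_mem_Gn F n) (m + 1))
              (mul_le_mul' (powLeSucc F (one_mem_G F) m) le_rfl)) (ih hcomm)
          · refine Submodule.mem_sup_right ?_
            exact mul_le_mul' (powLePow F (spanGn_le_spanG F n) (m + 1)) le_rfl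
              (Submodule.mul_mem_mul hw1 (Submodule.subset_span ⟨prP F n p hcompl z, rfl⟩))
          · exact Submodule.mem_sup_left
              (Submodule.smul_mem _ _ (powLeSucc F (one_mem_Gn F n) (m + 1) hw1))
      | zero => rw [zero_mul]; exact Submodule.zero_mem _
      | add g1 g2 hg1 hg2 ihg1 ihg2 => rw [add_mul]; exact add_mem ihg1 ihg2
      | smul c g hgmem ihg =>
        rw [smul_mul_assoc]; exact Submodule.smul_mem _ _ ihg

end Sup
end Stmt7Aux

/-- If 𝔤 = 𝔫₋ ⊕ 𝔭 as vector spaces, where 𝔫₋ and 𝔭 are Lie subalgebras of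
the finite-dimensional Lie algebra 𝔤 over a field of characteristic zero, and ρ : 𝔭 → F is a
character, then for all k ≥ 1 there is a direct sum decomposition
U^k(𝔤) = U^k(𝔫₋) ⊕ char^k(ρ). -/
theorem stmt7 (F L : Type*) [Field F] [CharZero F] [LieRing L] [LieAlgebra F L]
    [FiniteDimensional F L] (n p : LieSubalgebra F L)
    (hcompl : IsCompl n.toSubmodule p.toSubmodule)
    (ρ : p →ₗ[F] F) (hchar : ∀ x y : p, ρ ⁅x, y⁆ = 0) (k : ℕ) (hk : 1 ≤ k) :
    Disjoint (UkSub F n k) ((charIdeal F p ρ).restrictScalars F ⊓ Uk F L k) ∧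
    UkSub F n k ⊔ ((charIdeal F p ρ).restrictScalars F ⊓ Uk F L k) = Uk F L k := by
  constructor
  · rw [Submodule.disjoint_def]
    intro u hu1 hu2
    have hc : u ∈ charIdeal F p ρ := (Submodule.mem_inf.mp hu2).1
    have hr : u ∈ Subalgebra.toSubmodule (Stmt7Aux.jmap F n).range :=
      Stmt7Aux.UkSub_le_range F n k hu1
    obtain ⟨a, rfl⟩ := hr
    have h0 : Stmt7Aux.theta F n p hcompl ρ hchar (Stmt7Aux.jmap F n a) = 0 :=
      Stmt7Aux.theta_char F n p hcompl ρ hchar _ hc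
    rw [Stmt7Aux.theta_jmap] at h0
    rw [h0, map_zero]
  · apply le_antisymm
    · exact sup_le (Stmt7Aux.powLePow F (Stmt7Aux.spanGn_le_spanG F n) k) inf_le_right
    · obtain ⟨m, rfl⟩ : ∃ m, k = m + 1 := ⟨k - 1, by omega⟩
      refine le_trans (Stmt7Aux.main_claim F n p hcompl ρ m) (sup_le_sup_left ?_ _)
      refine le_inf ?_ ?_
      · refine Submodule.mul_le.mpr fun u hu s hs => ?_
        have hs' : s ∈ charIdeal F p ρ := Stmt7Aux.sRho_le_char F p ρ hs
        have h2 := Submodule.smul_mem (charIdeal F p ρ) u hs'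
        rwa [smul_eq_mul] at h2
      · have h3 : Stmt7Aux.spanG F (L := L) ^ m * Stmt7Aux.sRho F p ρ
            ≤ Stmt7Aux.spanG F (L := L) ^ m * Stmt7Aux.spanG F (L := L) :=
          mul_le_mul' le_rfl (Stmt7Aux.sRho_le_G F p ρ)
        rwa [← pow_succ] at h3
end

section
/- Let 𝔤 = sl₂(F) with standard basis e, f, h over a field F of characteristic zero, let n ≥ 0 be an integer and λ : 𝔟 → F the character of the Borel subalgebra 𝔟 = Fh ⊕ Fe with λ(h) = n, λ(e) = 0. Let v be a highest weight vector of the irreducible module V(n). Then the annihilator ideal of v in U(𝔤) equals U(𝔤)e + U(𝔤)(h − n) + U(𝔤)f^{n+1}. -/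
open TensorProduct FiniteDimensional

attribute [local instance 100] LieRing.ofAssociativeRing

/-- Induction principle for the universal enveloping algebra. -/
theorem uea_induction {R L : Type*} [CommRing R] [LieRing L] [LieAlgebra R L]
    {C : UniversalEnvelopingAlgebra R L → Prop}
    (halg : ∀ r, C (algebraMap R (UniversalEnvelopingAlgebra R L) r))
    (hι : ∀ x, C (UniversalEnvelopingAlgebra.ι R x))
    (hmul : ∀ a b, C a → C b → C (a * b)) (hadd : ∀ a b, C a → C b → C (a + b))
    (a : UniversalEnvelopingAlgebra R L) : C a := by
  obtain ⟨t, rfl⟩ := RingCon.mkₐ_surjective (α := R) (UniversalEnvelopingAlgebra.ringCon R L) a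
  induction t using TensorAlgebra.induction with
  | algebraMap r => rw [AlgHom.commutes]; exact halg r
  | ι x => exact hι x
  | mul a b ha hb => rw [map_mul]; exact hmul _ _ ha hb
  | add a b ha hb => rw [map_add]; exact hadd _ _ ha hb

/-- Commuting an element past a power, given a first-order commutation relation. -/
theorem comm_pow {F A : Type*} [CommRing F] [Ring A] [Algebra F A] (H Fm : A) (c : F)
    (hc : H * Fm = Fm * H + c • Fm) (k : ℕ) :
    H * Fm ^ k = Fm ^ k * H + ((k : F) * c) • Fm ^ k := by
  induction k with
  | zero => simp
  | succ k ih =>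
    have h1 : H * Fm ^ (k + 1) = (H * Fm) * Fm ^ k := by rw [pow_succ', ← mul_assoc]
    rw [h1, hc, add_mul, smul_mul_assoc, mul_assoc, ih, mul_add, mul_smul_comm,
      ← mul_assoc, ← pow_succ']
    rw [add_assoc, ← add_smul]
    congr 2
    push_cast
    ring

/-- For 𝔤 = sl₂(F) (char F = 0) with standard basis e, f, h, and v a highest
weight vector of the irreducible module V(n) (so ev = 0, hv = nv, f^{n+1}v = 0, f^k v ≠ 0 for
k ≤ n), the annihilator ideal of v in U(𝔤) equals U(𝔤)e + U(𝔤)(h − n) + U(𝔤)f^{n+1}. -/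
theorem stmt12 (F L V : Type*) [Field F] [CharZero F] [LieRing L] [LieAlgebra F L]
    [AddCommGroup V] [Module F V] [LieRingModule L V] [LieModule F L V]
    -- 𝔤 = sl₂ with standard basis e, f, h:
    (e f h : L) (hbasis : Submodule.span F {e, f, h} = ⊤)
    (hrank : Module.finrank F L = 3)
    (hef : ⁅e, f⁆ = h) (hhe : ⁅h, e⁆ = (2 : F) • e) (hhf : ⁅h, f⁆ = (-2 : F) • f)
    -- V = V(n), with highest weight vector v:
    (n : ℕ) (v : V) (hv : v ≠ 0) (hev : ⁅e, v⁆ = 0) (hhv : ⁅h, v⁆ = (n : F) • v)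
    (hind : LinearIndependent F fun i : Fin (n + 1) => (LieModule.toEnd F L V f ^ (i : ℕ)) v)
    (hspan : Submodule.span F (Set.range fun i : Fin (n + 1) =>
      (LieModule.toEnd F L V f ^ (i : ℕ)) v) = ⊤)
    (hftop : (LieModule.toEnd F L V f ^ (n + 1)) v = 0) :
    -- ann(v) = U(𝔤)e + U(𝔤)(h − n) + U(𝔤)f^{n+1}:
    LinearMap.ker (actMap F v) =
      (Submodule.span (UniversalEnvelopingAlgebra F L)
        {UniversalEnvelopingAlgebra.ι F e,
         UniversalEnvelopingAlgebra.ι F h -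
           algebraMap F (UniversalEnvelopingAlgebra F L) (n : F),
         (UniversalEnvelopingAlgebra.ι F f) ^ (n + 1)}).restrictScalars F := by
  classical
  set E := UniversalEnvelopingAlgebra.ι F e with hEdef
  set Fm := UniversalEnvelopingAlgebra.ι F f with hFdef
  set Hh := UniversalEnvelopingAlgebra.ι F h with hHdef
  set Cn := algebraMap F (UniversalEnvelopingAlgebra F L) (n : F) with hCdef
  set lft := UniversalEnvelopingAlgebra.lift F (LieModule.toEnd F L V) with hlft
  -- basic facts about actMap
  have act_apply : ∀ u, actMap F v u = lft u v := fun _ => rfl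
  have act_mul : ∀ a b, actMap F v (a * b) = lft a (actMap F v b) := by
    intro a b; rw [act_apply, act_apply, map_mul]; rfl
  have act_pow : ∀ k, actMap F v (Fm ^ k) = (LieModule.toEnd F L V f ^ k) v := by
    intro k
    rw [act_apply, hFdef, map_pow, hlft, UniversalEnvelopingAlgebra.lift_ι_apply]
  have gE : actMap F v E = 0 := by
    rw [act_apply, hEdef, hlft, UniversalEnvelopingAlgebra.lift_ι_apply,
      LieModule.toEnd_apply_apply, hev]
  have gH : actMap F v (Hh - Cn) = 0 := by
    rw [act_apply, map_sub, LinearMap.sub_apply, hHdef, hCdef, hlft,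
      UniversalEnvelopingAlgebra.lift_ι_apply, AlgHom.commutes,
      Module.algebraMap_end_apply, LieModule.toEnd_apply_apply, hhv, sub_self]
  have gF : actMap F v (Fm ^ (n + 1)) = 0 := by rw [act_pow]; exact hftop
  -- the left ideal and the complementary span
  set I := Submodule.span (UniversalEnvelopingAlgebra F L) {E, Hh - Cn, Fm ^ (n + 1)} with hIdef
  set Sp := Submodule.span F (Set.range fun i : Fin (n + 1) => Fm ^ (i : ℕ)) with hSpdef
  set S := I.restrictScalars F ⊔ Sp with hSdef
  have hIleft : ∀ (u : UniversalEnvelopingAlgebra F L) {x}, x ∈ I → u * x ∈ I := by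
    intro u x hx; simpa [smul_eq_mul] using I.smul_mem u hx
  have hIS : ∀ {x}, x ∈ I → x ∈ S := fun hx => Submodule.mem_sup_left hx
  have hSpS : ∀ {x}, x ∈ Sp → x ∈ S := fun hx => Submodule.mem_sup_right hx
  have hpow_mem : ∀ k, k ≤ n → Fm ^ k ∈ Sp := by
    intro k hk
    exact Submodule.subset_span ⟨⟨k, Nat.lt_succ_of_le hk⟩, rfl⟩
  have hEI : E ∈ I := Submodule.subset_span (by simp)
  have hHI : Hh - Cn ∈ I := Submodule.subset_span (by simp)
  have hFI : Fm ^ (n + 1) ∈ I := Submodule.subset_span (by simp)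
  -- commutation relations in U(𝔤)
  have hbrak : ∀ x y : L, UniversalEnvelopingAlgebra.ι F ⁅x, y⁆
      = UniversalEnvelopingAlgebra.ι F x * UniversalEnvelopingAlgebra.ι F y
        - UniversalEnvelopingAlgebra.ι F y * UniversalEnvelopingAlgebra.ι F x := by
    intro x y; rw [LieHom.map_lie, Ring.lie_def]
  have hHF : Hh * Fm = Fm * Hh + (-2 : F) • Fm := by
    have h1 := hbrak h f
    rw [hhf, map_smul] at h1
    rw [← hFdef, ← hHdef] at h1
    rw [h1]; abel
  have hEF : E * Fm = Fm * E + Hh := by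
    have h1 := hbrak e f
    rw [hef] at h1
    rw [← hFdef, ← hHdef, ← hEdef] at h1
    rw [h1]; abel
  have hHFk : ∀ k : ℕ, Hh * Fm ^ k = Fm ^ k * Hh + ((k : F) * (-2)) • Fm ^ k :=
    comm_pow Hh Fm (-2 : F) hHF
  -- closure of S under left multiplication by Fm
  have clF : ∀ s ∈ S, Fm * s ∈ S := by
    intro s hs
    rcases Submodule.mem_sup.mp hs with ⟨x, hx, y, hy, rfl⟩
    rw [mul_add]
    refine add_mem (hIS (hIleft Fm hx)) ?_
    refine Submodule.span_induction (p := fun y _ => Fm * y ∈ S) ?_ ?_ ?_ ?_ hy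
    · rintro _ ⟨i, rfl⟩
      rw [← pow_succ' Fm (i : ℕ)]
      rcases Nat.lt_or_ge (i : ℕ) n with hlt | hge
      · exact hSpS (hpow_mem _ (by omega))
      · have hin : (i : ℕ) = n := by omega
        rw [hin]; exact hIS hFI
    · simpa using S.zero_mem
    · intro a b _ _ ha hb; rw [mul_add]; exact add_mem ha hb
    · intro c a _ ha; rw [mul_smul_comm]; exact S.smul_mem c ha
  -- closure of S under left multiplication by Hh
  have clH : ∀ s ∈ S, Hh * s ∈ S := by
    intro s hs
    rcases Submodule.mem_sup.mp hs with ⟨x, hx, y, hy, rfl⟩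
    rw [mul_add]
    refine add_mem (hIS (hIleft Hh hx)) ?_
    refine Submodule.span_induction (p := fun y _ => Hh * y ∈ S) ?_ ?_ ?_ ?_ hy
    · rintro _ ⟨i, rfl⟩
      have hle : (i : ℕ) ≤ n := Nat.lt_succ_iff.mp i.isLt
      have hc : Fm ^ (i : ℕ) * Cn = (n : F) • Fm ^ (i : ℕ) := by
        rw [hCdef, ← Algebra.commutes, ← Algebra.smul_def]
      have key : Hh * Fm ^ (i : ℕ)
          = Fm ^ (i : ℕ) * (Hh - Cn) + (((n : F) + (i : F) * (-2)) • Fm ^ (i : ℕ)) := by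
        rw [mul_sub, hc, hHFk, add_smul]; abel
      rw [key]
      exact add_mem (hIS (hIleft _ hHI)) (S.smul_mem _ (hSpS (hpow_mem _ hle)))
    · simpa using S.zero_mem
    · intro a b _ _ ha hb; rw [mul_add]; exact add_mem ha hb
    · intro c a _ ha; rw [mul_smul_comm]; exact S.smul_mem c ha
  -- closure of S under left multiplication by E
  have clEk : ∀ k, k ≤ n → E * Fm ^ k ∈ S := by
    intro k
    induction k with
    | zero => intro _; simpa using hIS hEI
    | succ k ih =>
      intro hk
      have h1 : E * Fm ^ (k + 1) = Fm * (E * Fm ^ k) + Hh * Fm ^ k := by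
        rw [pow_succ', ← mul_assoc, hEF, add_mul, mul_assoc]
      rw [h1]
      exact add_mem (clF _ (ih (by omega))) (clH _ (hSpS (hpow_mem k (by omega))))
  have clE : ∀ s ∈ S, E * s ∈ S := by
    intro s hs
    rcases Submodule.mem_sup.mp hs with ⟨x, hx, y, hy, rfl⟩
    rw [mul_add]
    refine add_mem (hIS (hIleft E hx)) ?_
    refine Submodule.span_induction (p := fun y _ => E * y ∈ S) ?_ ?_ ?_ ?_ hy
    · rintro _ ⟨i, rfl⟩; exact clEk _ (Nat.lt_succ_iff.mp i.isLt)
    · simpa using S.zero_mem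
    · intro a b _ _ ha hb; rw [mul_add]; exact add_mem ha hb
    · intro c a _ ha; rw [mul_smul_comm]; exact S.smul_mem c ha
  -- closure of S under left multiplication by arbitrary elements
  have clAll : ∀ u : UniversalEnvelopingAlgebra F L, ∀ s ∈ S, u * s ∈ S := by
    intro u
    induction u using uea_induction with
    | halg r => intro s hs; rw [← Algebra.smul_def]; exact S.smul_mem r hs
    | hι x =>
      have hx : x ∈ Submodule.span F ({e, f, h} : Set L) := by
        rw [hbasis]; exact Submodule.mem_top
      refine Submodule.span_induction
        (p := fun x _ => ∀ s ∈ S, UniversalEnvelopingAlgebra.ι F x * s ∈ S) ?_ ?_ ?_ ?_ hx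
      · intro y hy s hs
        simp only [Set.mem_insert_iff, Set.mem_singleton_iff] at hy
        rcases hy with rfl | rfl | rfl
        exacts [clE s hs, clF s hs, clH s hs]
      · intro s hs; simpa using S.zero_mem
      · intro a b _ _ ha hb s hs
        rw [map_add, add_mul]; exact add_mem (ha s hs) (hb s hs)
      · intro c a _ ha s hs
        rw [map_smul, smul_mul_assoc]; exact S.smul_mem c (ha s hs)
    | hmul a b ha hb => intro s hs; rw [mul_assoc]; exact ha _ (hb _ hs)
    | hadd a b ha hb => intro s hs; rw [add_mul]; exact add_mem (ha s hs) (hb s hs)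
  have h1S : (1 : UniversalEnvelopingAlgebra F L) ∈ S := by
    simpa using hSpS (hpow_mem 0 (Nat.zero_le n))
  have hStop : ∀ u : UniversalEnvelopingAlgebra F L, u ∈ S := by
    intro u; simpa using clAll u 1 h1S
  -- the ideal annihilates v
  have hIker : ∀ x ∈ I, actMap F v x = 0 := by
    intro x hx
    refine Submodule.span_induction (p := fun x _ => actMap F v x = 0) ?_ ?_ ?_ ?_ hx
    · intro y hy
      simp only [Set.mem_insert_iff, Set.mem_singleton_iff] at hy
      rcases hy with rfl | rfl | rfl
      exacts [gE, gH, gF]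
    · exact map_zero _
    · intro a b _ _ ha hb; rw [map_add, ha, hb, add_zero]
    · intro a x _ hx0; rw [smul_eq_mul, act_mul, hx0, map_zero]
  -- conclusion
  ext u
  simp only [LinearMap.mem_ker, Submodule.restrictScalars_mem]
  constructor
  · intro hu
    rcases Submodule.mem_sup.mp (hStop u) with ⟨x, hx, y, hy, hxy⟩
    have hy0 : actMap F v y = 0 := by
      have h1 := congrArg (actMap F v) hxy
      rw [map_add, hIker x hx, zero_add, hu] at h1
      exact h1
    rw [hSpdef] at hy
    rcases (Submodule.mem_span_range_iff_exists_fun F).mp hy with ⟨c, hc⟩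
    have hsum : ∑ i : Fin (n + 1), c i • (LieModule.toEnd F L V f ^ (i : ℕ)) v = 0 := by
      have h1 := congrArg (actMap F v) hc
      rw [map_sum, hy0] at h1
      simpa only [map_smul, act_pow] using h1
    have hc0 : ∀ i, c i = 0 := Fintype.linearIndependent_iff.mp hind c hsum
    have hy' : y = 0 := by
      rw [← hc]
      simp [hc0]
    rw [← hxy, hy', add_zero]
    exact hx
  · intro hu
    exact hIker u hu
end
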